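/- arXiv:0801.4616 — 6 statements merged into one kernel-verified Lean document; each statement's English description precedes it below -/
import Mathlib

section
/- Let $M$ be a $k\times k$ matrix with integer entries and let $u\in\mathbb{R}^k$ be a vector such that $\|M^n u\|\to 0$ as $n\to\infty$. Then the convergence is exponential: there exist $0\le r<1$ and a constant $K$ such that $\|M^n u\|\le K r^n$ for all $n\in\mathbb{N}$. -/
/-!
The vectors whose orbit under `M` tends to zero form a subspace `S`, and the orbit of `u` stays in
`S`. Since `S` is finite-dimensional, pointwise convergence `Mⁿ v → 0` on `S` upgrades to
convergence of the operator norms of `Mⁿ` restricted to `S`; so some power `M^N` contracts `S` by a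
factor `1/2`, which forces geometric decay at rate `(1/2)^(1/N)`.
-/

open Filter Topology

theorem exists_le_mul_pow_of_le_pow_mul_add {x : ℕ → ℝ} {N : ℕ} (hN : 0 < N) {r : ℝ}
    (hr : 0 < r) (hx : ∀ n, x (n + N) ≤ r ^ N * x n) :
    ∃ K, ∀ n, x n ≤ K * r ^ n := by
  refine ⟨∑ s ∈ Finset.range N, |x s| / r ^ s, fun n => ?_⟩
  induction n using Nat.strong_induction_on with
  | _ n ih =>
    rcases lt_or_ge n N with hn | hn
    · have hterm : |x n| / r ^ n ≤ ∑ s ∈ Finset.range N, |x s| / r ^ s :=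
        Finset.single_le_sum (f := fun s => |x s| / r ^ s) (fun s _ => by positivity)
          (Finset.mem_range.mpr hn)
      calc x n ≤ |x n| / r ^ n * r ^ n := by
            rw [div_mul_cancel₀ _ (by positivity)]; exact le_abs_self _
        _ ≤ _ := by gcongr
    · obtain ⟨m, rfl⟩ := Nat.exists_eq_add_of_le' hn
      calc x (m + N) ≤ r ^ N * x m := hx m
        _ ≤ r ^ N * ((∑ s ∈ Finset.range N, |x s| / r ^ s) * r ^ m) := by
            gcongr; exact ih m (by omega)
        _ = _ := by ring

section Normed

variable {𝕜 : Type*} [NontriviallyNormedField 𝕜] {E : Type*} [NormedAddCommGroup E]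
  [NormedSpace 𝕜 E]

theorem ContinuousLinearMap.tendsto_norm_zero_of_forall_tendsto_apply [CompleteSpace 𝕜]
    [FiniteDimensional 𝕜 E] {α : Type*} {l : Filter α} {F : Type*} [NormedAddCommGroup F]
    [NormedSpace 𝕜 F] {f : α → E →L[𝕜] F}
    (h : ∀ v, Tendsto (fun a => f a v) l (𝓝 0)) : Tendsto (fun a => ‖f a‖) l (𝓝 0) := by
  let b := Module.finBasis 𝕜 E
  obtain ⟨C, -, hC⟩ := b.exists_opNorm_le (F := F)
  have hsum : Tendsto (fun a => C * ∑ i, ‖f a (b i)‖) l (𝓝 0) := by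
    simpa using (tendsto_finsetSum Finset.univ fun i _ => (h (b i)).norm).const_mul C
  refine squeeze_zero (fun a => norm_nonneg _) (fun a => hC (by positivity) fun i => ?_) hsum
  exact Finset.single_le_sum (f := fun i => ‖f a (b i)‖) (fun i _ => norm_nonneg _)
    (Finset.mem_univ i)

namespace Module.End

def stableSubmodule (T : Module.End 𝕜 E) : Submodule 𝕜 E where
  carrier := {v | Tendsto (fun n => (T ^ n) v) atTop (𝓝 0)}
  add_mem' {v w} hv hw := by simpa using hv.add hw
  zero_mem' := by simp
  smul_mem' c v hv := by simpa using hv.const_smul c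

variable {T : Module.End 𝕜 E}

theorem mem_stableSubmodule {v : E} :
    v ∈ T.stableSubmodule ↔ Tendsto (fun n => (T ^ n) v) atTop (𝓝 0) :=
  Iff.rfl

theorem pow_apply_mem_stableSubmodule {v : E} (hv : v ∈ T.stableSubmodule) (m : ℕ) :
    (T ^ m) v ∈ T.stableSubmodule := by
  rw [mem_stableSubmodule] at hv ⊢
  refine (hv.comp (tendsto_add_atTop_nat m)).congr fun n => ?_
  simp [pow_add, Module.End.mul_apply]

theorem exists_norm_pow_apply_le_mul_pow_of_tendsto [CompleteSpace 𝕜] [FiniteDimensional 𝕜 E]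
    {u : E} (hu : Tendsto (fun n => (T ^ n) u) atTop (𝓝 0)) :
    ∃ r K, 0 ≤ r ∧ r < 1 ∧ ∀ n, ‖(T ^ n) u‖ ≤ K * r ^ n := by
  let S := T.stableSubmodule
  let f : ℕ → S →L[𝕜] E := fun n => LinearMap.toContinuousLinearMap ((T ^ n) ∘ₗ S.subtype)
  have hf : Tendsto (fun n => ‖f n‖) atTop (𝓝 0) :=
    ContinuousLinearMap.tendsto_norm_zero_of_forall_tendsto_apply fun v => v.2
  obtain ⟨N, hfN, hN⟩ :=
    ((hf.eventually (ge_mem_nhds one_half_pos)).and (eventually_gt_atTop 0)).exists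
  set r : ℝ := (1 / 2) ^ (N⁻¹ : ℝ)
  have hr0 : 0 < r := by positivity
  have hr1 : r < 1 := Real.rpow_lt_one (by norm_num) (by norm_num) (by positivity)
  have hrN : r ^ N = 1 / 2 := Real.rpow_inv_natCast_pow (by norm_num) hN.ne'
  have hcontract (n : ℕ) : ‖(T ^ (n + N)) u‖ ≤ r ^ N * ‖(T ^ n) u‖ := by
    have hmem := pow_apply_mem_stableSubmodule (mem_stableSubmodule.mpr hu) n
    calc ‖(T ^ (n + N)) u‖ = ‖f N ⟨(T ^ n) u, hmem⟩‖ := by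
          rw [add_comm, pow_add, Module.End.mul_apply]; rfl
      _ ≤ ‖f N‖ * ‖(T ^ n) u‖ := (f N).le_opNorm _
      _ ≤ r ^ N * ‖(T ^ n) u‖ := by rw [hrN]; gcongr
  obtain ⟨K, hK⟩ :=
    exists_le_mul_pow_of_le_pow_mul_add (x := fun n => ‖(T ^ n) u‖) hN hr0 hcontract
  exact ⟨r, K, hr0.le, hr1, hK⟩

end Module.End

end Normed

/-- If `M` is a `k × k` integer matrix and `u ∈ ℝ^k` satisfies
`‖Mⁿ u‖ → 0`, then the convergence is exponential: there are `0 ≤ r < 1` and a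
constant `K` with `‖Mⁿ u‖ ≤ K rⁿ` for all `n`. -/
theorem exponential_decay_of_integer_matrix_power
    {k : ℕ} (M : Matrix (Fin k) (Fin k) ℤ) (u : Fin k → ℝ)
    (h : Tendsto (fun n : ℕ => ‖((M.map (Int.cast : ℤ → ℝ)) ^ n).mulVec u‖)
      atTop (nhds 0)) :
    ∃ (r K : ℝ), 0 ≤ r ∧ r < 1 ∧
      ∀ n : ℕ, ‖((M.map (Int.cast : ℤ → ℝ)) ^ n).mulVec u‖ ≤ K * r ^ n := by
  let T := Matrix.toLin' (M.map (Int.cast : ℤ → ℝ))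
  have hT : Tendsto (fun n => (T ^ n) u) atTop (𝓝 0) := by
    simpa [T, ← Matrix.toLin'_pow] using tendsto_zero_iff_norm_tendsto_zero.mpr h
  simpa [T, ← Matrix.toLin'_pow] using Module.End.exists_norm_pow_apply_le_mul_pow_of_tendsto hT
end

section
/- Let $(M(n))_{n\ge 1}$ be a sequence of square matrices with integer entries, taking only finitely many values (so all products below are defined), and set $P(n)=M(n)M(n-1)\cdots M(2)$ for $n\ge 2$ (with $P(1)$ the identity). Let $u$ be a real vector such that $\operatorname{dist}(P(n)u,\mathbb{Z}^k)\to 0$ as $n\to\infty$ (i.e., each entry of $P(n)u$ tends to the integers). Then there exist an integer $m$, an integer vector $w$, and a real vector $v$ such that $P(m)u = w + v$ and $\|M(n)\cdots M(m+1)v\|\to 0$ as $n\to\infty$. -/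
/-!
Write `x n = P n u` and let `r n = x n - round (x n)` be its rounding residual. Since
`x (n + 1) = M (n + 1) x n` with `M (n + 1)` integral, `r (n + 1) - M (n + 1) r n` is an integer
vector. The matrices `M n` have bounded norm, so once `r n` and `r (n + 1)` are small this
integer vector has norm `< 1` and vanishes. Hence from some index `m` on the residuals are
transported exactly, `r n = Q m n r m → 0`, and `P m u = round (x m) + r m` is the decomposition.
-/

open Filter Topology Matrix

attribute [local instance] Matrix.linftyOpNormedAddCommGroup

noncomputable def roundResidual {ι : Type*} (y : ι → ℝ) : ι → ℝ :=
  fun j => y j - round (y j)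

section

variable {ι κ : Type*} [Fintype κ]

lemma pi_norm_le_iSup_abs [Fintype ι] (y : ι → ℝ) : ‖y‖ ≤ ⨆ j, |y j| := by
  refine (pi_norm_le_iff_of_nonneg (Real.iSup_nonneg fun j => abs_nonneg _)).2 fun j => ?_
  exact le_ciSup (f := fun j => |y j|) (Set.finite_range _).bddAbove j

lemma eq_zero_of_norm_intCast_lt_one [Fintype ι] {z : ι → ℤ}
    (h : ‖fun j => (z j : ℝ)‖ < 1) : z = 0 := by
  ext j
  have : |(z j : ℝ)| < 1 := (norm_le_pi_norm (fun j => (z j : ℝ)) j).trans_lt h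
  exact Int.abs_lt_one_iff.1 (by exact_mod_cast this)

lemma roundResidual_mulVec_sub (A : Matrix ι κ ℤ) (y : κ → ℝ) :
    roundResidual (A.map (Int.cast : ℤ → ℝ) *ᵥ y) -
        A.map (Int.cast : ℤ → ℝ) *ᵥ roundResidual y =
      fun i => (((A *ᵥ fun j => round (y j)) -
        fun i => round ((A.map (Int.cast : ℤ → ℝ) *ᵥ y) i)) i : ℝ) := by
  ext i
  simp only [roundResidual, Pi.sub_apply, mulVec, dotProduct, map_apply, Int.cast_sub,
    Int.cast_sum, Int.cast_mul, mul_sub, Finset.sum_sub_distrib]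
  ring

lemma roundResidual_mulVec_of_norm_lt [Fintype ι] {A : Matrix ι κ ℤ} {y : κ → ℝ}
    (h : ‖roundResidual (A.map (Int.cast : ℤ → ℝ) *ᵥ y)‖ +
      ‖A.map (Int.cast : ℤ → ℝ)‖ * ‖roundResidual y‖ < 1) :
    roundResidual (A.map (Int.cast : ℤ → ℝ) *ᵥ y) =
      A.map (Int.cast : ℤ → ℝ) *ᵥ roundResidual y := by
  set B := A.map (Int.cast : ℤ → ℝ)
  refine sub_eq_zero.1 ?_
  have hint := eq_zero_of_norm_intCast_lt_one (z := (A *ᵥ fun j => round (y j)) -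
    fun i => round ((B *ᵥ y) i)) ?_
  · rw [roundResidual_mulVec_sub, hint]
    ext i
    simp
  rw [← roundResidual_mulVec_sub]
  calc ‖roundResidual (B *ᵥ y) - B *ᵥ roundResidual y‖
      ≤ ‖roundResidual (B *ᵥ y)‖ + ‖B *ᵥ roundResidual y‖ := norm_sub_le _ _
    _ ≤ ‖roundResidual (B *ᵥ y)‖ + ‖B‖ * ‖roundResidual y‖ := by
      gcongr; exact linfty_opNorm_mulVec _ _
    _ < 1 := h

end

section

variable {ι : Type*} [Fintype ι]

lemma map_intCast_mul (A B : Matrix ι ι ℤ) :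
    (A * B).map (Int.cast : ℤ → ℝ) = A.map Int.cast * B.map Int.cast :=
  Matrix.map_mul (f := Int.castRingHom ℝ)

lemma eventually_roundResidual_succ_eq_mulVec {A : ℕ → Matrix ι ι ℤ} {C : ℝ}
    (hC : ∀ n, ‖(A n).map (Int.cast : ℤ → ℝ)‖ ≤ C) {x : ℕ → ι → ℝ}
    (hx : ∀ᶠ n in atTop, x (n + 1) = (A (n + 1)).map (Int.cast : ℤ → ℝ) *ᵥ x n)
    (hres : Tendsto (fun n => roundResidual (x n)) atTop (𝓝 0)) :
    ∀ᶠ n in atTop, roundResidual (x (n + 1)) =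
      (A (n + 1)).map (Int.cast : ℤ → ℝ) *ᵥ roundResidual (x n) := by
  have hsmall : Tendsto (fun n => ‖roundResidual (x (n + 1))‖ + C * ‖roundResidual (x n)‖)
      atTop (𝓝 0) := by
    simpa using ((tendsto_norm_zero.comp hres).comp (tendsto_add_atTop_nat 1)).add
      ((tendsto_norm_zero.comp hres).const_mul C)
  filter_upwards [hx, hsmall.eventually (gt_mem_nhds one_pos)] with n hxn hn
  rw [hxn]
  refine roundResidual_mulVec_of_norm_lt ?_
  rw [← hxn]
  calc _ ≤ ‖roundResidual (x (n + 1))‖ + C * ‖roundResidual (x n)‖ := by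
        gcongr; exact hC _
    _ < 1 := hn

lemma mulVec_eq_of_forall_succ_eq_mulVec [DecidableEq ι] {B R : ℕ → Matrix ι ι ℤ}
    {m : ℕ} (hR0 : R m = 1) (hRrec : ∀ n, m ≤ n → R (n + 1) = B (n + 1) * R n)
    {e : ℕ → ι → ℝ}
    (he : ∀ n, m ≤ n → e (n + 1) = (B (n + 1)).map (Int.cast : ℤ → ℝ) *ᵥ e n) :
    ∀ n, m ≤ n → (R n).map (Int.cast : ℤ → ℝ) *ᵥ e m = e n := by
  intro n hn
  induction n, hn using Nat.le_induction with
  | base => simp [hR0, Matrix.map_one _ Int.cast_zero Int.cast_one]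
  | succ n hn ih => rw [hRrec n hn, he n hn, ← ih, map_intCast_mul, mulVec_mulVec]

end

theorem integer_plus_decaying_decomposition_general
    {k : ℕ} (M : ℕ → Matrix (Fin k) (Fin k) ℤ) (hfin : (Set.range M).Finite)
    (P : ℕ → Matrix (Fin k) (Fin k) ℤ)
    (hPrec : ∀ n : ℕ, 1 ≤ n → P (n+1) = M (n+1) * P n)
    (Q : ℕ → ℕ → Matrix (Fin k) (Fin k) ℤ)
    (hQ0 : ∀ m : ℕ, Q m m = 1)
    (hQrec : ∀ m n : ℕ, m ≤ n → Q m (n+1) = M (n+1) * Q m n)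
    (u : Fin k → ℝ)
    (hu : Tendsto (fun n : ℕ =>
        ⨆ j : Fin k, |((P n).map (Int.cast : ℤ → ℝ)).mulVec u j -
          (round (((P n).map (Int.cast : ℤ → ℝ)).mulVec u j) : ℝ)|)
      atTop (nhds 0)) :
    ∃ (m : ℕ) (w : Fin k → ℤ) (v : Fin k → ℝ), 1 ≤ m ∧
      ((P m).map (Int.cast : ℤ → ℝ)).mulVec u = (fun j => (w j : ℝ)) + v ∧
      Tendsto (fun n : ℕ => ‖((Q m n).map (Int.cast : ℤ → ℝ)).mulVec v‖)
        atTop (nhds 0) := by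
  set x : ℕ → Fin k → ℝ := fun n => (P n).map (Int.cast : ℤ → ℝ) *ᵥ u
  obtain ⟨C, hC⟩ : ∃ C, ∀ n, ‖(M n).map (Int.cast : ℤ → ℝ)‖ ≤ C := by
    obtain ⟨C, hC⟩ := (hfin.image fun A => ‖A.map (Int.cast : ℤ → ℝ)‖).bddAbove
    exact ⟨C, fun n => hC ⟨M n, ⟨n, rfl⟩, rfl⟩⟩
  have hres : Tendsto (fun n => ‖roundResidual (x n)‖) atTop (𝓝 0) :=
    squeeze_zero (fun n => norm_nonneg _) (fun n => pi_norm_le_iSup_abs _) hu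
  have hrec : ∀ᶠ n in atTop, x (n + 1) = (M (n + 1)).map (Int.cast : ℤ → ℝ) *ᵥ x n := by
    filter_upwards [eventually_ge_atTop 1] with n hn
    simp only [x, hPrec n hn, map_intCast_mul, mulVec_mulVec]
  obtain ⟨N, hN⟩ := eventually_atTop.1 <|
    eventually_roundResidual_succ_eq_mulVec hC hrec (tendsto_zero_iff_norm_tendsto_zero.2 hres)
  set m := max N 1
  refine ⟨m, fun j => round (x m j), roundResidual (x m), le_max_right _ _, ?_, ?_⟩
  · ext j
    simp [roundResidual, x]
  · refine hres.congr' ?_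
    filter_upwards [eventually_ge_atTop m] with n hn
    exact congrArg norm (mulVec_eq_of_forall_succ_eq_mulVec (hQ0 m) (hQrec m)
      (e := fun n => roundResidual (x n)) (fun n hn => hN n ((le_max_left _ _).trans hn)) n hn).symm

/-- Let `(M n)` be a sequence of square integer matrices taking only
finitely many values, `P n = M n ⋯ M 2` (with `P 1 = 1`), and `u` a real vector with
`dist(Pₙ u, ℤ^k) → 0`. Then there are `m`, an integer vector `w` and a real vector `v`
with `Pₘ u = w + v` and `‖M n ⋯ M (m+1) v‖ → 0`. -/
theorem integer_plus_decaying_decomposition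
    {k : ℕ} (M : ℕ → Matrix (Fin k) (Fin k) ℤ) (hfin : (Set.range M).Finite)
    (P : ℕ → Matrix (Fin k) (Fin k) ℤ) (hP1 : P 1 = 1)
    (hPrec : ∀ n : ℕ, 1 ≤ n → P (n+1) = M (n+1) * P n)
    (Q : ℕ → ℕ → Matrix (Fin k) (Fin k) ℤ)
    (hQ0 : ∀ m : ℕ, Q m m = 1)
    (hQrec : ∀ m n : ℕ, m ≤ n → Q m (n+1) = M (n+1) * Q m n)
    (u : Fin k → ℝ)
    (hu : Tendsto (fun n : ℕ =>
        ⨆ j : Fin k, |((P n).map (Int.cast : ℤ → ℝ)).mulVec u j -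
          (round (((P n).map (Int.cast : ℤ → ℝ)).mulVec u j) : ℝ)|)
      atTop (nhds 0)) :
    ∃ (m : ℕ) (w : Fin k → ℤ) (v : Fin k → ℝ), 1 ≤ m ∧
      ((P m).map (Int.cast : ℤ → ℝ)).mulVec u = (fun j => (w j : ℝ)) + v ∧
      Tendsto (fun n : ℕ => ‖((Q m n).map (Int.cast : ℤ → ℝ)).mulVec v‖)
        atTop (nhds 0) :=
  integer_plus_decaying_decomposition_general M hfin P hPrec Q hQ0 hQrec u hu
end

section
/- Let $(X,T)$ be a linearly recurrent minimal Cantor system with constant $L$, given by a nested sequence of clopen Kakutani–Rokhlin partitions $\mathcal{P}(n)$ with $C(n)$ towers of heights $h_k(n)$ satisfying (KR1)–(KR6) and (LR). Then for every $n\in\mathbb{N}$ we have $C(n)\le L$. -/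
open MeasureTheory Filter Topology

/-- A nested sequence of clopen Kakutani–Rokhlin partitions of `(X,T)`,
satisfying (KR1)-(KR6) and the linear recurrence condition (LR) with constant `L`.
The pieces of the `n`-th partition are the sets `T^{-j}(base n k)` for
`k : Fin (C n)` and `j < hgt n k`. -/
structure LRCantor (X : Type*) [TopologicalSpace X] (T : X ≃ₜ X) (L : ℕ) : Type _ where
  C : ℕ → ℕ
  hgt : (n : ℕ) → Fin (C n) → ℕ
  base : (n : ℕ) → Fin (C n) → Set X
  C_pos : ∀ n, 0 < C n
  hgt_pos : ∀ n k, 0 < hgt n k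
  clopen : ∀ n k, IsClopen (base n k)
  C_zero : C 0 = 1
  hgt_zero : ∀ k, hgt 0 k = 1
  base_zero : ∀ k, base 0 k = Set.univ
  pieces_disjoint : ∀ n (k k' : Fin (C n)) (j j' : ℕ), j < hgt n k → j' < hgt n k' →
    (k, j) ≠ (k', j') → Disjoint ((⇑T)^[j] ⁻¹' base n k) ((⇑T)^[j'] ⁻¹' base n k')
  pieces_cover : ∀ n (x : X), ∃ (k : Fin (C n)) (j : ℕ), j < hgt n k ∧ (⇑T)^[j] x ∈ base n k
  KR1 : ∀ n, (⋃ k, base (n+1) k) ⊆ ⋃ k, base n k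
  KR2 : ∀ n (k : Fin (C (n+1))) (j : ℕ), j < hgt (n+1) k →
    ∃ (k' : Fin (C n)) (j' : ℕ), j' < hgt n k' ∧
      (⇑T)^[j] ⁻¹' base (n+1) k ⊆ (⇑T)^[j'] ⁻¹' base n k'
  KR3 : ∃ x : X, (⋂ n, ⋃ k, base n k) = {x}
  KR4 : ∀ (U : Set X) (x : X), IsOpen U → x ∈ U →
    ∃ (n : ℕ) (k : Fin (C n)) (j : ℕ), j < hgt n k ∧ x ∈ (⇑T)^[j] ⁻¹' base n k ∧
      (⇑T)^[j] ⁻¹' base n k ⊆ U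
  KR5 : ∀ n (l : Fin (C (n+1))) (k : Fin (C n)),
    ∃ j, j < hgt (n+1) l ∧ (⇑T)^[j] ⁻¹' base (n+1) l ⊆ base n k
  KR6 : ∀ n, (⋃ k, base (n+1) k) ⊆ base n ⟨0, C_pos n⟩
  LR : ∀ n (l : Fin (C (n+1))) (k : Fin (C n)), hgt (n+1) l ≤ L * hgt n k

namespace LRCantor

variable {X : Type*} [TopologicalSpace X] {T : X ≃ₜ X} {L : ℕ}

/-- The incidence numbers `m_{l,k}(n+1)` of the sequence of partitions. -/
noncomputable def m (S : LRCantor X T L) (n : ℕ) (l : Fin (S.C (n+1))) (k : Fin (S.C n)) : ℕ :=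
  Set.ncard {j : ℕ | j < S.hgt (n+1) l ∧ (⇑T)^[j] ⁻¹' S.base (n+1) l ⊆ S.base n k}

end LRCantor

/-- `lam` is a continuous eigenvalue of `(X,T)`. -/
def IsContinuousEigenvalue {X : Type*} [TopologicalSpace X] (T : X ≃ₜ X) (lam : ℂ) : Prop :=
  ∃ f : X → ℂ, Continuous f ∧ f ≠ 0 ∧ ∀ x, f (T x) = lam * f x

/-- `lam` is a measure-theoretical eigenvalue of `(X,T,μ)`. -/
def IsEigenvalue {X : Type*} [TopologicalSpace X] [MeasurableSpace X] (T : X ≃ₜ X)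
    (μ : Measure X) (lam : ℂ) : Prop :=
  ∃ f : X → ℂ, MemLp f 2 μ ∧ ¬ (f =ᵐ[μ] 0) ∧
    (fun x => f (T x)) =ᵐ[μ] fun x => lam * f x

/-- `(X,T)` is a minimal homeomorphism: the only closed invariant subsets are `∅` and `X`. -/
def IsMinimal {X : Type*} [TopologicalSpace X] (T : X ≃ₜ X) : Prop :=
  ∀ A : Set X, IsClosed A → (⇑T) '' A = A → A = ∅ ∨ A = Set.univ

/-!
Fix a point `x` in the base of a tower `l` of level `n+1`, of height `H`, and follow its
backward orbit `T⁻ʲ x` up the tower. By (KR5) every tower `k` of level `n` is entered at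
some time `eₖ < H`, and it is climbed completely before time `H`, because `T⁻ᴴ x` lies in a
base of level `n+1`, hence (KR1) in a base of level `n`. The climbs of different level-`n` pieces
occupy disjoint times, so `∑ₖ hₖ(n) ≤ H ≤ L · minₖ hₖ(n)`, which gives `C(n) ≤ L`.
-/

namespace LRCantor

variable {X : Type*} [TopologicalSpace X] {T : X ≃ₜ X} {L : ℕ} (S : LRCantor X T L)

theorem eq_of_iterate_mem_base {m : ℕ} {w : X} {k k' : Fin (S.C m)} {i i' : ℕ}
    (hi : i < S.hgt m k) (hi' : i' < S.hgt m k')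
    (h : (⇑T)^[i] w ∈ S.base m k) (h' : (⇑T)^[i'] w ∈ S.base m k') : k = k' ∧ i = i' := by
  by_contra hne
  refine Set.disjoint_left.mp (S.pieces_disjoint m k k' i i' hi hi' ?_) h h'
  rwa [Ne, Prod.mk.injEq]

theorem hgt_le_of_iterate_mem_base {m j : ℕ} {w : X} {k k' : Fin (S.C m)}
    (hw : w ∈ S.base m k') (hj : 0 < j) (h : (⇑T)^[j] w ∈ S.base m k) : S.hgt m k ≤ j := by
  by_contra! hlt
  exact hj.ne' (S.eq_of_iterate_mem_base hlt (S.hgt_pos m k') h hw).2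

theorem exists_symm_mem_base_of_mem_top {m : ℕ} {v : X} {k : Fin (S.C m)}
    (hv : (⇑T)^[S.hgt m k - 1] v ∈ S.base m k) : ∃ k', T.symm v ∈ S.base m k' := by
  obtain ⟨k', j, hj, hmem⟩ := S.pieces_cover m (T.symm v)
  cases j with
  | zero => exact ⟨k', hmem⟩
  | succ j =>
    rw [Function.iterate_succ_apply, T.apply_symm_apply] at hmem
    obtain ⟨rfl, rfl⟩ :=
      S.eq_of_iterate_mem_base (by omega) (Nat.sub_one_lt (S.hgt_pos m k).ne') hmem hv
    omega

theorem iterate_mem_base_symm_iterate {m : ℕ} {k : Fin (S.C m)} {x : X}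
    (hx : x ∈ S.base m k) (j : ℕ) : (⇑T)^[j] ((⇑T.symm)^[j] x) ∈ S.base m k := by
  rwa [(Function.LeftInverse.iterate T.apply_symm_apply j) x]

theorem add_hgt_le_of_symm_iterate_mem_base {m e H : ℕ} {x : X} {k k₀ : Fin (S.C m)}
    (hH : (⇑T.symm)^[H] x ∈ S.base m k₀) (he : e < H) (hx : (⇑T.symm)^[e] x ∈ S.base m k) :
    e + S.hgt m k ≤ H := by
  have hclimb : (⇑T)^[H - e] ((⇑T.symm)^[H] x) = (⇑T.symm)^[e] x := by
    rw [← Nat.sub_add_cancel he.le, Function.iterate_add_apply, Nat.add_sub_cancel,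
      (Function.LeftInverse.iterate T.apply_symm_apply _) _]
  have := S.hgt_le_of_iterate_mem_base hH (Nat.sub_pos_of_lt he) (hclimb ▸ hx)
  omega

theorem sum_hgt_le_of_symm_iterate_mem_base {m H : ℕ} {x : X} (e : Fin (S.C m) → ℕ)
    (he_fit : ∀ k, e k + S.hgt m k ≤ H) (he_mem : ∀ k, (⇑T.symm)^[e k] x ∈ S.base m k) :
    ∑ k, S.hgt m k ≤ H := by
  have hinj : Function.Injective fun p : Σ k, Fin (S.hgt m k) =>
      (⟨e p.1 + p.2, by have := he_fit p.1; omega⟩ : Fin H) := by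
    rintro ⟨k, i⟩ ⟨k', i'⟩ heq
    have hval : e k + i = e k' + i' := congrArg Fin.val heq
    have hk : (⇑T)^[i] ((⇑T.symm)^[e k + i] x) ∈ S.base m k := by
      rw [add_comm, Function.iterate_add_apply]
      exact S.iterate_mem_base_symm_iterate (he_mem k) i
    have hk' : (⇑T)^[i'] ((⇑T.symm)^[e k + i] x) ∈ S.base m k' := by
      rw [hval, add_comm, Function.iterate_add_apply]
      exact S.iterate_mem_base_symm_iterate (he_mem k') i'
    obtain ⟨rfl, hii'⟩ := S.eq_of_iterate_mem_base i.2 i'.2 hk hk'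
    rw [Fin.val_inj.mp hii']
  simpa [Fintype.card_sigma] using Fintype.card_le_of_injective _ hinj

theorem sum_hgt_le_hgt_succ {n : ℕ} {l : Fin (S.C (n+1))} {x : X}
    (hx : x ∈ S.base (n+1) l) : ∑ k, S.hgt n k ≤ S.hgt (n+1) l := by
  set H := S.hgt (n+1) l
  have hH : 0 < H := S.hgt_pos (n+1) l
  obtain ⟨l', hl'⟩ := S.exists_symm_mem_base_of_mem_top
    (S.iterate_mem_base_symm_iterate hx (H - 1))
  rw [← Function.iterate_succ_apply' (⇑T.symm), Nat.succ_eq_add_one,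
    Nat.sub_add_cancel hH] at hl'
  obtain ⟨k₀, hk₀⟩ := Set.mem_iUnion.mp (S.KR1 n (Set.mem_iUnion.mpr ⟨l', hl'⟩))
  choose e he_lt he_sub using S.KR5 n l
  have he_mem : ∀ k, (⇑T.symm)^[e k] x ∈ S.base n k :=
    fun k => he_sub k (S.iterate_mem_base_symm_iterate hx (e k))
  exact S.sum_hgt_le_of_symm_iterate_mem_base e
    (fun k => S.add_hgt_le_of_symm_iterate_mem_base hk₀ (he_lt k) (he_mem k)) he_mem

end LRCantor

variable {X : Type*} [TopologicalSpace X] [CompactSpace X] [TopologicalSpace.MetrizableSpace X]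
  [TotallyDisconnectedSpace X] [PerfectSpace X] [Nonempty X]
theorem numTowers_le_of_linearlyRecurrent_general
    (T : X ≃ₜ X) {L : ℕ} (S : LRCantor X T L) :
    ∀ n : ℕ, S.C n ≤ L := by
  intro n
  obtain ⟨z⟩ := ‹Nonempty X›
  obtain ⟨l, j, -, hz⟩ := S.pieces_cover (n+1) z
  obtain ⟨k₀, -, hk₀⟩ := Finset.exists_min_image Finset.univ (S.hgt n)
    ⟨⟨0, S.C_pos n⟩, Finset.mem_univ _⟩
  have hbound : S.C n * S.hgt n k₀ ≤ L * S.hgt n k₀ :=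
    calc S.C n * S.hgt n k₀
        ≤ ∑ k, S.hgt n k := by
          simpa using Finset.card_nsmul_le_sum _ _ _ hk₀
      _ ≤ S.hgt (n+1) l := S.sum_hgt_le_hgt_succ hz
      _ ≤ L * S.hgt n k₀ := S.LR n l k₀
  exact Nat.le_of_mul_le_mul_right hbound (S.hgt_pos n k₀)

/-- In a linearly recurrent minimal Cantor system with constant `L`,
the number of towers satisfies `C(n) ≤ L` for every `n`. -/
theorem numTowers_le_of_linearlyRecurrent
    (T : X ≃ₜ X) (hmin : IsMinimal T) {L : ℕ} (S : LRCantor X T L) :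
    ∀ n : ℕ, S.C n ≤ L :=
  numTowers_le_of_linearlyRecurrent_general T S
end

section
/- Let $(X,T)$ be a linearly recurrent minimal Cantor system with constant $L$. Then for every $n\in\mathbb{N}$ and all $1\le k,k'\le C(n)$, the heights satisfy $h_k(n)\le L\, h_{k'}(n)$. -/
open MeasureTheory Filter Topology

variable {X : Type*} [TopologicalSpace X] [CompactSpace X] [TopologicalSpace.MetrizableSpace X]
  [TotallyDisconnectedSpace X] [PerfectSpace X] [Nonempty X]

/-!
Heights never decrease from one level to the next. By (KR5) some floor `j` of a tower `l` of level
`n + 1` lies in the base of tower `k` of level `n`. The point `z` one step past the top of tower `l`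
lies in a base of level `n + 1` (floors of a level are disjoint), hence in the base of tower `0` of
level `n` (KR6); but `z` also lies on floor `h_l(n+1) - j ≥ 1` of tower `k`, so that floor cannot
exist: `h_k(n) ≤ h_l(n+1)`. With (LR), `h_k(n+1) ≤ L h_0(n) ≤ L h_{k'}(n+1)`; at level `0` all
heights are `1` and `L ≥ 1`.
-/

namespace LRCantor

-- Rebinding `X` keeps the Cantor-space instances of the outer `variable` out of these lemmas.
variable {X : Type*} [TopologicalSpace X] {T : X ≃ₜ X} {L : ℕ}

theorem one_le_constant (S : LRCantor X T L) : 1 ≤ L := by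
  have hgt_le := S.LR 0 ⟨0, S.C_pos 1⟩ ⟨0, S.C_pos 0⟩
  rw [S.hgt_zero, mul_one] at hgt_le
  exact (S.hgt_pos 1 _).trans_le hgt_le

variable (S : LRCantor X T L)

theorem base_nonempty [Nonempty X] (n : ℕ) (k : Fin (S.C n)) : (S.base n k).Nonempty := by
  obtain ⟨x⟩ := ‹Nonempty X›
  obtain ⟨l, i, -, hx⟩ := S.pieces_cover (n + 1) x
  obtain ⟨j, -, hsub⟩ := S.KR5 n l k
  exact (Set.Nonempty.preimage ⟨_, hx⟩ (T.surjective.iterate j)).mono hsub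

theorem mem_iUnion_base_of_iterate_hgt_mem_base {n : ℕ} {l : Fin (S.C n)} {z : X}
    (hz : (⇑T)^[S.hgt n l] z ∈ S.base n l) : z ∈ ⋃ k, S.base n k := by
  obtain ⟨k, j, hj, hzk⟩ := S.pieces_cover n z
  rcases j with _ | j
  · exact Set.mem_iUnion.2 ⟨k, hzk⟩
  have hl := S.hgt_pos n l
  have hTz_l : (⇑T)^[S.hgt n l - 1] (T z) ∈ S.base n l := by
    rwa [← Function.iterate_succ_apply, Nat.succ_eq_add_one, Nat.sub_add_cancel hl]
  have hTz_k : (⇑T)^[j] (T z) ∈ S.base n k := by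
    rwa [← Function.iterate_succ_apply]
  have hsame : (l, S.hgt n l - 1) = (k, j) := by
    by_contra hne
    exact Set.disjoint_left.1 (S.pieces_disjoint n l k _ _ (by omega) (by omega) hne) hTz_l hTz_k
  obtain ⟨rfl, hj'⟩ := Prod.mk.inj hsame
  omega

theorem hgt_le_hgt_succ [Nonempty X] (n : ℕ) (l : Fin (S.C (n + 1))) (k : Fin (S.C n)) :
    S.hgt n k ≤ S.hgt (n + 1) l := by
  obtain ⟨j, hj, hsub⟩ := S.KR5 n l k
  by_contra! hlt
  set h := S.hgt (n + 1) l
  obtain ⟨y, hy⟩ := S.base_nonempty (n + 1) l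
  obtain ⟨z, rfl⟩ := T.surjective.iterate h y
  have hz_base : z ∈ S.base n ⟨0, S.C_pos n⟩ :=
    S.KR6 n (S.mem_iUnion_base_of_iterate_hgt_mem_base hy)
  have hz_floor : (⇑T)^[h - j] z ∈ S.base n k := by
    apply hsub
    rwa [Set.mem_preimage, ← Function.iterate_add_apply, Nat.add_sub_cancel' hj.le]
  have hdisj := S.pieces_disjoint n ⟨0, S.C_pos n⟩ k 0 (h - j) (S.hgt_pos n _) (by omega)
    (by simp only [ne_eq, Prod.mk.injEq, not_and]; omega)
  exact Set.disjoint_left.1 hdisj hz_base hz_floor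

end LRCantor

theorem heights_comparable_of_linearlyRecurrent_general
    (T : X ≃ₜ X) {L : ℕ} (S : LRCantor X T L) :
    ∀ (n : ℕ) (k k' : Fin (S.C n)), S.hgt n k ≤ L * S.hgt n k' := by
  intro n k k'
  cases n with
  | zero => simpa only [S.hgt_zero, mul_one] using S.one_le_constant
  | succ n =>
    calc S.hgt (n + 1) k ≤ L * S.hgt n ⟨0, S.C_pos n⟩ := S.LR n k _
      _ ≤ L * S.hgt (n + 1) k' := Nat.mul_le_mul_left L (S.hgt_le_hgt_succ n k' _)

/-- In a linearly recurrent minimal Cantor system with constant `L`,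
the heights at a given level are comparable: `h_k(n) ≤ L · h_{k'}(n)`. -/
theorem heights_comparable_of_linearlyRecurrent
    (T : X ≃ₜ X) (hmin : IsMinimal T) {L : ℕ} (S : LRCantor X T L) :
    ∀ (n : ℕ) (k k' : Fin (S.C n)), S.hgt n k ≤ L * S.hgt n k' :=
  heights_comparable_of_linearlyRecurrent_general T S
end

section
/- Let $(X,T)$ be a linearly recurrent minimal Cantor system with constant $L$ given by a nested sequence of CKR partitions, and let $\mu$ be a $T$-invariant Borel probability measure. Then for every $n\in\mathbb{N}$ and every $1\le k\le C(n)$, we have $h_k(n)\,\mu(B_k(n))\ge 1/L$. -/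
/-! Every level of a tower has the measure of its base, and the levels of the `n`-th partition
tile `X`, so `μ univ = ∑ₗ h_l(n+1) μ(B_l(n+1))`. By (LR) each `h_l(n+1)` is at most
`L h_k(n)`, and by (KR5) every base `B_l(n+1)` has a level inside `B_k(n)`; these levels are
disjoint, so `∑ₗ μ(B_l(n+1)) ≤ μ(B_k(n))`. Together, `μ univ ≤ L h_k(n) μ(B_k(n))`. -/

open MeasureTheory Filter Topology

open Function
open scoped ENNReal

namespace LRCantor

variable {X : Type*} [TopologicalSpace X] {T : X ≃ₜ X} {L : ℕ} (S : LRCantor X T L)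

def level (n : ℕ) (p : Σ k : Fin (S.C n), Fin (S.hgt n k)) : Set X :=
  (⇑T)^[p.2] ⁻¹' S.base n p.1

theorem iUnion_level (n : ℕ) : ⋃ p, S.level n p = Set.univ :=
  Set.eq_univ_of_forall fun x =>
    let ⟨k, j, hj, hx⟩ := S.pieces_cover n x
    Set.mem_iUnion.2 ⟨⟨k, j, hj⟩, hx⟩

theorem pairwise_disjoint_level (n : ℕ) : Pairwise (Disjoint on S.level n) := by
  rintro ⟨k, j⟩ ⟨k', j'⟩ hne
  refine S.pieces_disjoint n k k' j j' j.2 j'.2 fun h => hne ?_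
  obtain ⟨rfl, hj⟩ := Prod.mk.inj h
  rw [Fin.ext hj]

variable [MeasurableSpace X] [OpensMeasurableSpace X] {μ : Measure X}

theorem measurableSet_level (hT : Measurable T) (n : ℕ)
    (p : Σ k : Fin (S.C n), Fin (S.hgt n k)) : MeasurableSet (S.level n p) :=
  (S.clopen n p.1).isOpen.measurableSet.preimage (hT.iterate p.2)

theorem measure_level (hT : MeasurePreserving T μ μ) (n : ℕ)
    (p : Σ k : Fin (S.C n), Fin (S.hgt n k)) : μ (S.level n p) = μ (S.base n p.1) :=
  (hT.iterate p.2).measure_preimage (S.clopen n p.1).isOpen.measurableSet.nullMeasurableSet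

theorem sum_hgt_mul_measure_base (hT : MeasurePreserving T μ μ) (n : ℕ) :
    ∑ k, (S.hgt n k : ℝ≥0∞) * μ (S.base n k) = μ Set.univ := by
  rw [← S.iUnion_level n, measure_iUnion (S.pairwise_disjoint_level n)
    (S.measurableSet_level hT.measurable n), tsum_fintype, Fintype.sum_sigma]
  simp only [S.measure_level hT, Finset.sum_const, Finset.card_univ, Fintype.card_fin,
    nsmul_eq_mul]

theorem sum_measure_base_succ_le (hT : MeasurePreserving T μ μ) (n : ℕ) (k : Fin (S.C n)) :
    ∑ l, μ (S.base (n + 1) l) ≤ μ (S.base n k) := by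
  choose j hj hsub using fun l => S.KR5 n l k
  let levelInBase : Fin (S.C (n + 1)) → Σ l : Fin (S.C (n + 1)), Fin (S.hgt (n + 1) l) :=
    fun l => ⟨l, j l, hj l⟩
  have hinj : Injective levelInBase := fun l l' h => congrArg Sigma.fst h
  calc ∑ l, μ (S.base (n + 1) l) = ∑ l, μ (S.level (n + 1) (levelInBase l)) :=
        Finset.sum_congr rfl fun l _ => (S.measure_level hT (n + 1) (levelInBase l)).symm
    _ = μ (⋃ l, S.level (n + 1) (levelInBase l)) := by
        rw [measure_iUnion ((S.pairwise_disjoint_level (n + 1)).comp_of_injective hinj)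
          fun l => S.measurableSet_level hT.measurable _ _, tsum_fintype]
    _ ≤ μ (S.base n k) := measure_mono (Set.iUnion_subset hsub)

theorem measure_univ_le_mul_hgt_mul_measure_base (hT : MeasurePreserving T μ μ) (n : ℕ)
    (k : Fin (S.C n)) : μ Set.univ ≤ L * S.hgt n k * μ (S.base n k) :=
  calc μ Set.univ = ∑ l, (S.hgt (n + 1) l : ℝ≥0∞) * μ (S.base (n + 1) l) :=
        (S.sum_hgt_mul_measure_base hT (n + 1)).symm
    _ ≤ ∑ l, (L * S.hgt n k : ℝ≥0∞) * μ (S.base (n + 1) l) := by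
        gcongr with l
        exact_mod_cast S.LR n l k
    _ ≤ L * S.hgt n k * μ (S.base n k) := by
        rw [← Finset.mul_sum]
        gcongr
        exact S.sum_measure_base_succ_le hT n k

end LRCantor

variable {X : Type*} [TopologicalSpace X] [CompactSpace X] [TopologicalSpace.MetrizableSpace X]
  [TotallyDisconnectedSpace X] [PerfectSpace X] [Nonempty X]
variable [MeasurableSpace X] [BorelSpace X]

theorem measure_tower_ge_of_linearlyRecurrent_general
    (T : X ≃ₜ X) {L : ℕ} (S : LRCantor X T L)
    (μ : Measure X) [IsProbabilityMeasure μ] (hinv : MeasurePreserving T μ μ) :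
    ∀ (n : ℕ) (k : Fin (S.C n)),
      (1 : ℝ) / L ≤ (S.hgt n k : ℝ) * (μ (S.base n k)).toReal := by
  intro n k
  have h := S.measure_univ_le_mul_hgt_mul_measure_base hinv n k
  rw [measure_univ, mul_assoc] at h
  have h' : (1 : ℝ) ≤ L * (S.hgt n k * (μ (S.base n k)).toReal) := by
    simpa using ENNReal.toReal_mono (by finiteness) h
  exact div_le_of_le_mul₀ L.cast_nonneg (by positivity) (by linarith)

/-- For any invariant probability measure `μ` of a linearly recurrent
minimal Cantor system with constant `L`, one has `h_k(n) · μ(B_k(n)) ≥ 1/L`. -/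
theorem measure_tower_ge_of_linearlyRecurrent
    (T : X ≃ₜ X) (hmin : IsMinimal T) {L : ℕ} (S : LRCantor X T L)
    (μ : Measure X) [IsProbabilityMeasure μ] (hinv : MeasurePreserving T μ μ) :
    ∀ (n : ℕ) (k : Fin (S.C n)),
      (1 : ℝ) / L ≤ (S.hgt n k : ℝ) * (μ (S.base n k)).toReal :=
  measure_tower_ge_of_linearlyRecurrent_general T S μ hinv
end

section
/- Let $(M(n))_{n\ge 2}$ be a sequence of $2\times 2$ integer matrices with entries in $\{1,\dots,L\}$ and determinant $\pm 1$, let $P(n)=M(n)\cdots M(2)$ with entries $\begin{pmatrix}x_n & y_n\\ z_n & w_n\end{pmatrix}$, and set $h_1(n)=x_n+y_n$, $h_2(n)=z_n+w_n$. Suppose $x_n/h_1(n)\to\mu_1$ and $z_n/h_2(n)\to\mu_1$ as $n\to\infty$ for some $\mu_1\in[0,1]$, and set $\mu_2=1-\mu_1$. Then for $v=(\mu_2,-\mu_1)^t$ there is a constant $C$ with $\|P(n)v\|\le C2^{-n}$ for all $n$; in particular $\|P(n)v\|\to 0$ exponentially. -/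
/-!
Entries at least `1` make each row sum `h(n) = xₙ + yₙ` of `P n` at least double at every
step, while the cross difference `x_{n+1} h(n) - xₙ h(n+1)` equals `±` an off-diagonal entry of
`M (n+1)` times `det (P n) = ±1`, hence is at most `L` in absolute value. So consecutive ratios
`x_k / h(k)` differ by at most `L / (h(k) h(k+1)) ≤ L 2⁻ᵏ / h(n)` for `k ≥ n`, and summing this
geometric tail gives `|xₙ - h(n) μ₁| ≤ 2 L 2⁻ⁿ`. This is the first entry of `P n v`, and the
second row is handled in the same way.
-/

open Filter Topology

section Convergents

variable {x h : ℕ → ℝ} {L : ℝ}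

theorem abs_mul_div_succ_sub_mul_div_le {n k : ℕ} (hn : 0 < h n) (hnk : h n ≤ h k)
    (hgrowth : 2 ^ k ≤ h (k + 1)) (hcross : |x (k + 1) * h k - x k * h (k + 1)| ≤ L) :
    |h n * (x (k + 1) / h (k + 1)) - h n * (x k / h k)| ≤ L * 2⁻¹ ^ k := by
  have hk : 0 < h k := hn.trans_le hnk
  have hk1 : 0 < h (k + 1) := (pow_pos two_pos k).trans_le hgrowth
  calc |h n * (x (k + 1) / h (k + 1)) - h n * (x k / h k)|
      = h n * |x (k + 1) * h k - x k * h (k + 1)| / (h k * h (k + 1)) := by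
        rw [← mul_sub, abs_mul, abs_of_pos hn, div_sub_div _ _ hk1.ne' hk.ne',
          mul_comm (h (k + 1)) (x k), abs_div, abs_of_pos (mul_pos hk1 hk)]
        ring
    _ ≤ h k * L / (h k * h (k + 1)) := by gcongr
    _ = L / h (k + 1) := mul_div_mul_left _ _ hk.ne'
    _ ≤ L / 2 ^ k :=
      div_le_div_of_nonneg_left ((abs_nonneg _).trans hcross) (by positivity) hgrowth
    _ = L * 2⁻¹ ^ k := by rw [inv_pow, div_eq_mul_inv]

theorem abs_sub_mul_le_of_tendsto_div {μ : ℝ} {n : ℕ}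
    (hlim : Tendsto (fun k => x k / h k) atTop (𝓝 μ)) (hn : 0 < h n)
    (hmono : MonotoneOn h (Set.Ici n)) (hgrowth : ∀ k ≥ n, 2 ^ k ≤ h (k + 1))
    (hcross : ∀ k ≥ n, |x (k + 1) * h k - x k * h (k + 1)| ≤ L) :
    |x n - h n * μ| ≤ 2 * L * 2⁻¹ ^ n := by
  set f : ℕ → ℝ := fun j => h n * (x (n + j) / h (n + j))
  have hf : Tendsto f atTop (𝓝 (h n * μ)) := by
    refine ((tendsto_add_atTop_iff_nat n).2 hlim).const_mul (h n) |>.congr fun j => ?_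
    simp only [f, add_comm]
  have hstep : ∀ j, dist (f j) (f (j + 1)) ≤ L * 2⁻¹ ^ n * 2⁻¹ ^ j := fun j => by
    rw [dist_comm, Real.dist_eq, mul_assoc, ← pow_add]
    exact abs_mul_div_succ_sub_mul_div_le hn
      (hmono (Set.mem_Ici.2 le_rfl) (Nat.le_add_right n j) (Nat.le_add_right n j))
      (hgrowth _ (Nat.le_add_right n j)) (hcross _ (Nat.le_add_right n j))
  have hdist := dist_le_of_le_geometric_of_tendsto₀ _ _ (by norm_num) hstep hf
  convert hdist using 1
  · simp only [f, Real.dist_eq, add_zero, mul_div_cancel₀ _ hn.ne']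
  · rw [show (1 : ℝ) - 2⁻¹ = 2⁻¹ by norm_num]
    ring

end Convergents

section TwoByTwo

variable {R : Type*}

theorem add_le_mul_apply_add [CommSemiring R] [PartialOrder R] [IsOrderedRing R]
    {M P : Matrix (Fin 2) (Fin 2) R} (hM : ∀ i j, 1 ≤ M i j) (hP : ∀ j, 0 ≤ P j 0 + P j 1)
    (i : Fin 2) : (P 0 0 + P 0 1) + (P 1 0 + P 1 1) ≤ (M * P) i 0 + (M * P) i 1 := by
  have hrow : (M * P) i 0 + (M * P) i 1 = M i 0 * (P 0 0 + P 0 1) + M i 1 * (P 1 0 + P 1 1) := by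
    simp only [Matrix.mul_apply, Fin.sum_univ_two]
    ring
  rw [hrow]
  gcongr <;> exact le_mul_of_one_le_left (hP _) (hM _ _)

theorem abs_mul_apply_mul_add_sub_eq [CommRing R] [LinearOrder R] [IsStrictOrderedRing R]
    (M P : Matrix (Fin 2) (Fin 2) R) (i : Fin 2) :
    |(M * P) i 0 * (P i 0 + P i 1) - P i 0 * ((M * P) i 0 + (M * P) i 1)| =
      |M i i.rev| * |P.det| := by
  fin_cases i
  · rw [← abs_neg, ← abs_mul]
    congr 1
    simp only [Fin.zero_eta, Fin.isValue, Fin.rev_zero, Fin.reduceLast, Matrix.mul_apply,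
      Fin.sum_univ_two, Matrix.det_fin_two]
    ring
  · rw [← abs_mul]
    congr 1
    simp only [Fin.mk_one, Fin.isValue, Fin.reduceRev, Matrix.mul_apply, Fin.sum_univ_two,
      Matrix.det_fin_two]
    ring

end TwoByTwo

section Products

variable {M P : ℕ → Matrix (Fin 2) (Fin 2) ℝ}

theorem two_pow_le_rowSum (hM : ∀ n ≥ 2, ∀ i j, 1 ≤ M n i j) (hP1 : P 1 = 1)
    (hPrec : ∀ n ≥ 1, P (n + 1) = M (n + 1) * P n) (k : ℕ) (i : Fin 2) :
    2 ^ k ≤ P (k + 1) i 0 + P (k + 1) i 1 := by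
  induction k generalizing i with
  | zero => fin_cases i <;> simp [hP1]
  | succ k ih =>
    have hk := add_le_mul_apply_add (hM (k + 2) (by omega))
      (fun j => (ih j).trans' (by positivity)) i
    rw [← hPrec (k + 1) (by omega)] at hk
    linarith [ih 0, ih 1, pow_succ (2 : ℝ) k]

theorem monotoneOn_rowSum (hM : ∀ n ≥ 2, ∀ i j, 1 ≤ M n i j) (hP1 : P 1 = 1)
    (hPrec : ∀ n ≥ 1, P (n + 1) = M (n + 1) * P n) (i : Fin 2) :
    MonotoneOn (fun k => P k i 0 + P k i 1) (Set.Ici 1) := by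
  refine monotoneOn_nat_Ici_of_le_succ fun k hk => ?_
  obtain ⟨k, rfl⟩ := Nat.exists_eq_add_of_le' hk
  have hpos j : 0 ≤ P (k + 1) j 0 + P (k + 1) j 1 :=
    (two_pow_le_rowSum hM hP1 hPrec k j).trans' (by positivity)
  have hk := add_le_mul_apply_add (hM (k + 2) (by omega)) hpos i
  rw [← hPrec (k + 1) (by omega)] at hk
  have hle_sum : ∀ j : Fin 2, P (k + 1) j 0 + P (k + 1) j 1 ≤
      (P (k + 1) 0 0 + P (k + 1) 0 1) + (P (k + 1) 1 0 + P (k + 1) 1 1) :=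
    Fin.forall_fin_two.2 ⟨by linarith [hpos 1], by linarith [hpos 0]⟩
  exact (hle_sum i).trans hk

theorem abs_det_eq_one (hdet : ∀ n ≥ 2, |(M n).det| = 1) (hP1 : P 1 = 1)
    (hPrec : ∀ n ≥ 1, P (n + 1) = M (n + 1) * P n) : ∀ k ≥ 1, |(P k).det| = 1 := by
  refine Nat.le_induction (by simp [hP1]) fun k hk ih => ?_
  rw [hPrec k hk, Matrix.det_mul, abs_mul, ih, hdet (k + 1) (by omega), mul_one]

theorem abs_apply_sub_rowSum_mul_le {L μ : ℝ}
    (hM : ∀ n ≥ 2, ∀ i j, 1 ≤ M n i j ∧ M n i j ≤ L) (hdet : ∀ n ≥ 2, |(M n).det| = 1)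
    (hP1 : P 1 = 1) (hPrec : ∀ n ≥ 1, P (n + 1) = M (n + 1) * P n) (i : Fin 2)
    (hlim : Tendsto (fun n => P n i 0 / (P n i 0 + P n i 1)) atTop (𝓝 μ)) {n : ℕ} (hn : 1 ≤ n) :
    |P n i 0 - (P n i 0 + P n i 1) * μ| ≤ 2 * L * 2⁻¹ ^ n := by
  have hM1 : ∀ n ≥ 2, ∀ i j, 1 ≤ M n i j := fun n hn i j => (hM n hn i j).1
  obtain ⟨m, rfl⟩ := Nat.exists_eq_add_of_le' hn
  refine abs_sub_mul_le_of_tendsto_div hlim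
    ((two_pow_le_rowSum hM1 hP1 hPrec m i).trans_lt' (by positivity))
    ((monotoneOn_rowSum hM1 hP1 hPrec i).mono (Set.Ici_subset_Ici.2 hn))
    (fun k _ => two_pow_le_rowSum hM1 hP1 hPrec k i) fun k hk => ?_
  have hk1 : 1 ≤ k := hn.trans hk
  rw [hPrec k hk1, abs_mul_apply_mul_add_sub_eq, abs_det_eq_one hdet hP1 hPrec k hk1, mul_one,
    abs_of_pos ((hM1 (k + 1) (by omega) i i.rev).trans_lt' one_pos)]
  exact (hM (k + 1) (by omega) i i.rev).2

end Products

theorem exponential_decay_two_by_two_unimodular_general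
    (L : ℕ) (M : ℕ → Matrix (Fin 2) (Fin 2) ℤ)
    (hent : ∀ n : ℕ, 2 ≤ n → ∀ i j : Fin 2, 1 ≤ M n i j ∧ M n i j ≤ (L : ℤ))
    (hdet : ∀ n : ℕ, 2 ≤ n → (M n).det = 1 ∨ (M n).det = -1)
    (P : ℕ → Matrix (Fin 2) (Fin 2) ℤ)
    (hP1 : P 1 = 1) (hPrec : ∀ n : ℕ, 1 ≤ n → P (n+1) = M (n+1) * P n)
    (μ₁ : ℝ)
    (hx : Tendsto (fun n : ℕ => (P n 0 0 : ℝ) / ((P n 0 0 : ℝ) + (P n 0 1 : ℝ)))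
      atTop (nhds μ₁))
    (hz : Tendsto (fun n : ℕ => (P n 1 0 : ℝ) / ((P n 1 0 : ℝ) + (P n 1 1 : ℝ)))
      atTop (nhds μ₁)) :
    ∃ C : ℝ, ∀ n : ℕ, 1 ≤ n →
      ‖((P n).map (Int.cast : ℤ → ℝ)).mulVec ![1 - μ₁, -μ₁]‖ ≤ C * (2 : ℝ)⁻¹ ^ n := by
  set Q : ℕ → Matrix (Fin 2) (Fin 2) ℝ := fun n => (P n).map Int.cast
  set N : ℕ → Matrix (Fin 2) (Fin 2) ℝ := fun n => (M n).map Int.cast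
  have hN : ∀ n ≥ 2, ∀ i j, 1 ≤ N n i j ∧ N n i j ≤ L := fun n hn i j => by
    simp only [N, Matrix.map_apply]
    exact_mod_cast hent n hn i j
  have hdetN : ∀ n ≥ 2, |(N n).det| = 1 := fun n hn => by
    rcases hdet n hn with h | h <;> simp [N, ← Int.cast_det, h]
  have hQ1 : Q 1 = 1 := by simp [Q, hP1]
  have hQrec : ∀ n ≥ 1, Q (n + 1) = N (n + 1) * Q n := fun n hn => by
    simp only [Q, N, hPrec n hn]
    exact Matrix.map_mul (f := Int.castRingHom ℝ)
  have hlim : ∀ i, Tendsto (fun n => Q n i 0 / (Q n i 0 + Q n i 1)) atTop (𝓝 μ₁) :=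
    Fin.forall_fin_two.2 ⟨hx, hz⟩
  refine ⟨2 * L, fun n hn => (pi_norm_le_iff_of_nonneg (by positivity)).2 fun i => ?_⟩
  calc ‖(Q n).mulVec ![1 - μ₁, -μ₁] i‖ = |Q n i 0 - (Q n i 0 + Q n i 1) * μ₁| := by
        simp only [Real.norm_eq_abs, Matrix.mulVec, dotProduct, Fin.sum_univ_two,
          Matrix.cons_val_zero, Matrix.cons_val_one]
        congr 1
        ring
    _ ≤ 2 * L * 2⁻¹ ^ n := abs_apply_sub_rowSum_mul_le hN hdetN hQ1 hQrec i (hlim i) hn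

/-- For products `P n = M n ⋯ M 2` of `2 × 2` integer matrices with
entries in `{1,…,L}` and determinant `±1`, writing `P n = !![xₙ, yₙ; zₙ, wₙ]`,
`h₁(n) = xₙ + yₙ`, `h₂(n) = zₙ + wₙ`, if `xₙ/h₁(n) → μ₁` and `zₙ/h₂(n) → μ₁`,
then for `v = (μ₂, -μ₁)` with `μ₂ = 1 - μ₁` there is a constant `C` with
`‖P n • v‖ ≤ C 2⁻ⁿ` for all `n ≥ 1`. -/
theorem exponential_decay_two_by_two_unimodular
    (L : ℕ) (M : ℕ → Matrix (Fin 2) (Fin 2) ℤ)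
    (hent : ∀ n : ℕ, 2 ≤ n → ∀ i j : Fin 2, 1 ≤ M n i j ∧ M n i j ≤ (L : ℤ))
    (hdet : ∀ n : ℕ, 2 ≤ n → (M n).det = 1 ∨ (M n).det = -1)
    (P : ℕ → Matrix (Fin 2) (Fin 2) ℤ)
    (hP1 : P 1 = 1) (hPrec : ∀ n : ℕ, 1 ≤ n → P (n+1) = M (n+1) * P n)
    (μ₁ : ℝ) (hμ₁ : μ₁ ∈ Set.Icc (0 : ℝ) 1)
    (hx : Tendsto (fun n : ℕ => (P n 0 0 : ℝ) / ((P n 0 0 : ℝ) + (P n 0 1 : ℝ)))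
      atTop (nhds μ₁))
    (hz : Tendsto (fun n : ℕ => (P n 1 0 : ℝ) / ((P n 1 0 : ℝ) + (P n 1 1 : ℝ)))
      atTop (nhds μ₁)) :
    ∃ C : ℝ, ∀ n : ℕ, 1 ≤ n →
      ‖((P n).map (Int.cast : ℤ → ℝ)).mulVec ![1 - μ₁, -μ₁]‖ ≤ C * (2 : ℝ)⁻¹ ^ n :=
  exponential_decay_two_by_two_unimodular_general L M hent hdet P hP1 hPrec μ₁ hx hz
end
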